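/- Let N be a k-bounded data Petri net with injective labelling ℓ, B = DPNtoDDS(N), and CG the constraint graph of B. Then N satisfies property (P3) if and only if for every transition t ∈ T of N the label ℓ(t) labels some edge of CG. -/

import Mathlib

/-! ## Basic framework: values, assignments, formulas -/

/-- Values: booleans, integers, or rationals. -/
abbrev Val : Type := Bool ⊕ ℤ ⊕ ℚ

/-- An assignment of values to the variables in `V`. -/
abbrev Assign (V : Type) : Type := V → Val

/-- A formula over variables `V`, represented semantically by its set of satisfying
assignments.  (Formulas are taken up to logical equivalence, which by `funext`/`propext`
coincides with equality of this representation; by quantifier elimination for linear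
arithmetic, existential quantification stays within the language.) -/
def Formula (V : Type) : Type := Assign V → Prop

/-- Satisfiability of a formula. -/
def Formula.Sat {V : Type} (φ : Formula V) : Prop := ∃ α, φ α

/-- `C_α` : the formula `⋀_{v ∈ V} v = α(v)`. -/
def Cof {V : Type} (α : Assign V) : Formula V := fun α' => ∀ v, α' v = α v

/-- A transition variable assignment: values for the annotated variables
`V^r ∪ V^w` (read copies and written copies of the variables). -/
structure TAssign (V : Type) where
  read : Assign V
  write : Assign V

/-- A constraint of linear arithmetic over the annotated variables `V^r ∪ V^w`,
represented semantically, together with the sets `read`/`write` of variables whose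
read resp. written copies occur in it (`sat_congr` expresses that the constraint
depends only on occurring annotated variables). -/
structure Guard (V : Type) where
  sat : TAssign V → Prop
  reads : Set V
  writes : Set V
  sat_congr : ∀ β β' : TAssign V,
    (∀ v ∈ reads, β.read v = β'.read v) →
    (∀ v ∈ writes, β.write v = β'.write v) → (sat β ↔ sat β')

/-! ## Data-aware dynamic systems (DDS) -/

/-- A data-aware dynamic system `⟨B, b_I, A, Δ, B_F, V, α_I, guard⟩`
with states drawn from `S`, actions from `A` and process variables `V`. -/
structure DDS (S A V : Type) where
  states : Set S
  init : S
  trans : Set (S × A × S)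
  finals : Set S
  alphaI : Assign V
  guard : A → Guard V

/-- A step `(b, α) →(a,β) (b', α')` of a DDS. -/
def DDS.Step {S A V : Type} (D : DDS S A V) (b : S) (α : Assign V) (a : A)
    (β : TAssign V) (b' : S) (α' : Assign V) : Prop :=
  (b, a, b') ∈ D.trans ∧
  (∀ v, β.read v = α v) ∧
  (∀ v ∈ (D.guard a).writes, α' v = β.write v) ∧
  (∀ v, v ∉ (D.guard a).writes → α' v = α v) ∧
  (D.guard a).sat β

/-- `(b, α) →* (b', α')`: a derivation (finite sequence of consecutive steps) exists. -/
inductive DDS.Reach {S A V : Type} (D : DDS S A V) :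
    S × Assign V → S × Assign V → Prop
  | refl (c : S × Assign V) : Reach D c c
  | step {c : S × Assign V} {b b' : S} {α α' : Assign V} {a : A} {β : TAssign V} :
      Reach D c (b, α) → D.Step b α a β b' α' → Reach D c (b', α')

/-- The DDS has a blocked state: a run reaches a configuration from which
no final state is reachable. -/
def DDS.HasBlockedState {S A V : Type} (D : DDS S A V) : Prop :=
  ∃ b α, D.Reach (D.init, D.alphaI) (b, α) ∧
    ¬ ∃ bf α', bf ∈ D.finals ∧ D.Reach (b, α) (bf, α')

/-- A state `b` is reachable in the DDS. -/
def DDS.ReachableState {S A V : Type} (D : DDS S A V) (b : S) : Prop :=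
  ∃ α, D.Reach (D.init, D.alphaI) (b, α)

/-- A transition `(b, a, b') ∈ Δ` is reachable: some run traverses it. -/
def DDS.ReachableTrans {S A V : Type} (D : DDS S A V) (b : S) (a : A) (b' : S) : Prop :=
  (b, a, b') ∈ D.trans ∧
  ∃ α β α', D.Reach (D.init, D.alphaI) (b, α) ∧ D.Step b α a β b' α'

/-- Derivations recording their abstraction: `DDS.Deriv D b α σ b' α'` means there is a
derivation `(b, α) →* (b', α')` whose abstraction (symbolic derivation) is
`b →a₁ b₁ →a₂ ⋯ →aₙ bₙ`, recorded as the trace `σ = [(a₁,b₁),…,(aₙ,bₙ)]`. -/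
inductive DDS.Deriv {S A V : Type} (D : DDS S A V) :
    S → Assign V → List (A × S) → S → Assign V → Prop
  | refl (b : S) (α : Assign V) : Deriv D b α [] b α
  | step {b : S} {α : Assign V} {σ : List (A × S)} {b' : S} {α' : Assign V}
      {a : A} {β : TAssign V} {b'' : S} {α'' : Assign V} :
      Deriv D b α σ b' α' → D.Step b' α' a β b'' α'' →
      Deriv D b α (σ ++ [(a, b'')]) b'' α''

/-- Symbolic derivations: `DDS.SymDeriv D b σ b'` means `b →a₁ b₁ ⋯ →aₙ bₙ = b'`
is a symbolic derivation (only states and actions, i.e. the trace `σ`). -/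
inductive DDS.SymDeriv {S A V : Type} (D : DDS S A V) : S → List (A × S) → S → Prop
  | refl (b : S) : SymDeriv D b [] b
  | step {b : S} {σ : List (A × S)} {b' : S} {a : A} {b'' : S} :
      SymDeriv D b σ b' → (b', a, b'') ∈ D.trans → SymDeriv D b (σ ++ [(a, b'')]) b''

/-! ## Constraint graphs -/

/-- `update(φ, a)`: the formula (it exists by quantifier elimination) that is logically
equivalent to `∃U. φ[U/V] ∧ Δ_a[U/V^r, V/V^w]`, where `Δ_a` is the transition formula
`guard(a) ∧ ⋀_{v ∉ write(a)} v^w = v^r`. -/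
def DDS.update {S A V : Type} (D : DDS S A V) (φ : Formula V) (a : A) : Formula V :=
  fun α' => ∃ u : Assign V, φ u ∧ (D.guard a).sat ⟨u, α'⟩ ∧
    ∀ v, v ∉ (D.guard a).writes → α' v = u v

/-- Nodes of the constraint graph `CG(b₀, φ₀)` (with initial node `(b₀, φ₀)`);
for `CG(b₀, α)` take `φ₀ = C_α`.  Formulas are taken up to logical equivalence,
which in the semantic representation is equality. -/
inductive DDS.CGNode {S A V : Type} (D : DDS S A V) (b0 : S) (φ0 : Formula V) :
    S → Formula V → Prop
  | init : CGNode D b0 φ0 b0 φ0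
  | step {b : S} {φ : Formula V} {a : A} {b' : S} :
      CGNode D b0 φ0 b φ → (b, a, b') ∈ D.trans → Formula.Sat (D.update φ a) →
      CGNode D b0 φ0 b' (D.update φ a)

/-- Edges `(b, φ) →a (b', φ')` of the constraint graph with initial node `(b₀, φ₀)`. -/
def DDS.CGEdge {S A V : Type} (D : DDS S A V) (b0 : S) (φ0 : Formula V)
    (b : S) (φ : Formula V) (a : A) (b' : S) (φ' : Formula V) : Prop :=
  D.CGNode b0 φ0 b φ ∧ (b, a, b') ∈ D.trans ∧ Formula.Sat (D.update φ a) ∧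
    φ' = D.update φ a

/-- Paths in the constraint graph with initial node `(b₀, φ₀)`, from the initial node to a
node `(b, φ)`, recording the symbolic derivation `σ(π)` as the trace `σ : List (A × S)`. -/
inductive DDS.CGPath {S A V : Type} (D : DDS S A V) (b0 : S) (φ0 : Formula V) :
    S → Formula V → List (A × S) → Prop
  | refl : CGPath D b0 φ0 b0 φ0 []
  | step {b : S} {φ : Formula V} {σ : List (A × S)} {a : A} {b' : S} :
      CGPath D b0 φ0 b φ σ → (b, a, b') ∈ D.trans → Formula.Sat (D.update φ a) →
      CGPath D b0 φ0 b' (D.update φ a) (σ ++ [(a, b')])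

/-! ## The constraint graph `CG(b)` with placeholder variables `V₀` -/

/-- Lift a guard over `V` to one over `V ⊕ V`, where `Sum.inl v` is the variable `v ∈ V`
and `Sum.inr v` is the placeholder variable `v₀ ∈ V₀` (which is never read nor written). -/
def Guard.lift {V : Type} (g : Guard V) : Guard (V ⊕ V) where
  sat β := g.sat ⟨fun v => β.read (Sum.inl v), fun v => β.write (Sum.inl v)⟩
  reads := Sum.inl '' g.reads
  writes := Sum.inl '' g.writes
  sat_congr := by
    intro β β' hr hw
    apply g.sat_congr
    · intro v hv; exact hr _ ⟨v, hv, rfl⟩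
    · intro v hv; exact hw _ ⟨v, hv, rfl⟩

/-- Lift a DDS over variables `V` to one over `V ⊕ V`, where the second copy plays the
role of the fresh placeholder variables `V₀` (same states and transitions). -/
def DDS.lift {S A V : Type} (D : DDS S A V) : DDS S A (V ⊕ V) where
  states := D.states
  init := D.init
  trans := D.trans
  finals := D.finals
  alphaI := Sum.elim D.alphaI D.alphaI
  guard a := (D.guard a).lift

/-- The initial-node formula `⋀_{v ∈ V} v = v₀` of the constraint graph `CG(b)`. -/
def placeholderInit (V : Type) : Formula (V ⊕ V) :=
  fun γ => ∀ v, γ (Sum.inl v) = γ (Sum.inr v)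

/-- `final(b)`: the set of formulas `ψ` such that `(b_F, ψ)` is a node of `CG(b)`. -/
def DDS.finalFormulas {S A V : Type} (D : DDS S A V) (b bF : S) :
    Set (Formula (V ⊕ V)) :=
  {ψ | DDS.CGNode D.lift b (placeholderInit V) bF ψ}

/-- `blocked(b, φ)`: the formula (over the placeholder variables `V₀`, so represented as a
predicate on assignments to `V₀ ≅ V`) `φ[V₀/V] ∧ ¬(∃V. ⋁_{ψ ∈ final(b)} ψ)`. -/
def DDS.blocked {S A V : Type} (D : DDS S A V) (bF : S) (b : S) (φ : Formula V) :
    Formula V :=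
  fun α0 => φ α0 ∧
    ¬ ∃ (αv : Assign V) (ψ : Formula (V ⊕ V)),
        ψ ∈ D.finalFormulas b bF ∧ ψ (Sum.elim αv α0)

/-! ## Data Petri nets (DPN) -/

/-- A data Petri net `⟨P, T, F, ℓ, A, V, guard⟩` together with its initial marking `M_I`,
final marking `M_F` and initial assignment `α₀`.  The flow relation is split into its
place-to-transition and transition-to-place parts. -/
structure DPN (P T A V : Type) where
  flowPT : P → T → ℕ
  flowTP : T → P → ℕ
  lab : T → A
  guard : T → Guard V
  MI : P → ℕ
  MF : P → ℕ
  alpha0 : Assign V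

/-- A transition firing `(M, α) →(t,β) (M', α')` of a DPN. -/
def DPN.Firing {P T A V : Type} (N : DPN P T A V) (M : P → ℕ) (α : Assign V)
    (t : T) (β : TAssign V) (M' : P → ℕ) (α' : Assign V) : Prop :=
  (∀ v ∈ (N.guard t).reads, β.read v = α v) ∧
  (N.guard t).sat β ∧
  (∀ p, N.flowPT p t ≤ M p) ∧
  (∀ p, M' p = M p - N.flowPT p t + N.flowTP t p) ∧
  (∀ v ∈ (N.guard t).writes, α' v = β.write v) ∧
  (∀ v, v ∉ (N.guard t).writes → α' v = α v)

/-- `(M, α) →* (M', α')`: a sequence of transition firings of the DPN. -/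
inductive DPN.Reach {P T A V : Type} (N : DPN P T A V) :
    (P → ℕ) × Assign V → (P → ℕ) × Assign V → Prop
  | refl (c : (P → ℕ) × Assign V) : Reach N c c
  | step {c : (P → ℕ) × Assign V} {M M' : P → ℕ} {α α' : Assign V}
      {t : T} {β : TAssign V} :
      Reach N c (M, α) → N.Firing M α t β M' α' → Reach N c (M', α')

/-- The DPN is `k`-bounded. -/
def DPN.Bounded {P T A V : Type} (N : DPN P T A V) (k : ℕ) : Prop :=
  ∀ M α, N.Reach (N.MI, N.alpha0) (M, α) → ∀ p, M p ≤ k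

/-- Property (P1): every reachable state can be continued to a process run. -/
def DPN.P1 {P T A V : Type} (N : DPN P T A V) : Prop :=
  ∀ M α, N.Reach (N.MI, N.alpha0) (M, α) → ∃ α', N.Reach (M, α) (N.MF, α')

/-- Property (P2): termination is clean. -/
def DPN.P2 {P T A V : Type} (N : DPN P T A V) : Prop :=
  ∀ M α, N.Reach (N.MI, N.alpha0) (M, α) → (∀ p, N.MF p ≤ M p) → M = N.MF

/-- Property (P3): no dead transitions. -/
def DPN.P3 {P T A V : Type} (N : DPN P T A V) : Prop :=
  ∀ t : T, ∃ M α β M' α',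
    N.Reach (N.MI, N.alpha0) (M, α) ∧ N.Firing M α t β M' α'

/-- Data-aware soundness: (P1) ∧ (P2) ∧ (P3). -/
def DPN.Sound {P T A V : Type} (N : DPN P T A V) : Prop := N.P1 ∧ N.P2 ∧ N.P3

/-- `B = DPNtoDDS(N)` for a `k`-bounded DPN `N` with injective labelling: the states of `B`
are the `k`-bounded markings, initial state `M_I`, final states `{M_F}`, initial assignment
`α₀`, `guard'(ℓ(t)) = guard(t)`, and `(M, a, M') ∈ Δ` iff there is `t` with `ℓ(t) = a`,
`M(p) ≥ F(p,t)` and `M'(p) = M(p) − F(p,t) + F(t,p)` for all `p`. -/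
def IsDPNtoDDS {P T A V : Type} (N : DPN P T A V) (k : ℕ) (D : DDS (P → ℕ) A V) : Prop :=
  D.states = {M | ∀ p, M p ≤ k} ∧
  D.init = N.MI ∧
  D.finals = {N.MF} ∧
  D.alphaI = N.alpha0 ∧
  (∀ t, D.guard (N.lab t) = N.guard t) ∧
  ∀ M a M', (M, a, M') ∈ D.trans ↔
    ((∀ p, M p ≤ k) ∧ (∀ p, M' p ≤ k) ∧
      ∃ t, N.lab t = a ∧ (∀ p, N.flowPT p t ≤ M p) ∧
        (∀ p, M' p = M p - N.flowPT p t + N.flowTP t p))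

/-! A configuration is reachable exactly when it satisfies the formula of some node of the
constraint graph with the same state; hence an action labels an edge of the constraint graph
exactly when it is executable from some reachable configuration. Under `DPNtoDDS`, runs and
firings of the net correspond to runs and steps of the DDS (boundedness makes every reachable
marking a state of the DDS), and injectivity of the labelling recovers the transition from
the action. -/

namespace DDS

variable {S A V : Type} {D : DDS S A V}

theorem Step.update_of_sat {b b' : S} {α α' : Assign V} {a : A} {β : TAssign V}
    {φ : Formula V} (h : D.Step b α a β b' α') (hφ : φ α) : D.update φ a α' := by
  obtain ⟨-, hread, hwrite, hframe, hsat⟩ := h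
  have hguard : (D.guard a).sat ⟨α, α'⟩ :=
    ((D.guard a).sat_congr β ⟨α, α'⟩ (fun v _ => hread v)
      (fun v hv => (hwrite v hv).symm)).mp hsat
  exact ⟨α, hφ, hguard, hframe⟩

theorem exists_step_of_update {b b' : S} {α' : Assign V} {a : A} {φ : Formula V}
    (htrans : (b, a, b') ∈ D.trans) (h : D.update φ a α') :
    ∃ α β, φ α ∧ D.Step b α a β b' α' := by
  obtain ⟨u, hu, hsat, hframe⟩ := h
  exact ⟨u, ⟨u, α'⟩, hu, htrans, fun _ => rfl, fun _ _ => rfl, hframe, hsat⟩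

theorem CGNode.reach_of_sat {b0 b : S} {α0 α : Assign V} {φ : Formula V}
    (h : D.CGNode b0 (Cof α0) b φ) (hα : φ α) : D.Reach (b0, α0) (b, α) := by
  induction h generalizing α with
  | init =>
    obtain rfl : α = α0 := funext hα
    exact Reach.refl _
  | step _ htrans _ ih =>
    obtain ⟨u, β, hu, hstep⟩ := exists_step_of_update htrans hα
    exact (ih hu).step hstep

theorem Reach.exists_cgNode {b0 b : S} {α0 α : Assign V} (h : D.Reach (b0, α0) (b, α)) :
    ∃ φ, D.CGNode b0 (Cof α0) b φ ∧ φ α := by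
  generalize hc : (b, α) = c at h
  induction h generalizing b α with
  | refl => cases hc; exact ⟨Cof α0, CGNode.init, fun _ => rfl⟩
  | step _ hstep ih =>
    cases hc
    obtain ⟨φ, hnode, hφ⟩ := ih rfl
    have hupd := hstep.update_of_sat hφ
    exact ⟨_, hnode.step hstep.1 ⟨_, hupd⟩, hupd⟩

theorem exists_cgEdge_iff {b0 : S} {α0 : Assign V} {a : A} :
    (∃ b φ b' φ', D.CGEdge b0 (Cof α0) b φ a b' φ') ↔
      ∃ b α β b' α', D.Reach (b0, α0) (b, α) ∧ D.Step b α a β b' α' := by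
  constructor
  · rintro ⟨b, φ, b', _, hnode, htrans, ⟨α', hupd⟩, -⟩
    obtain ⟨α, β, hα, hstep⟩ := exists_step_of_update htrans hupd
    exact ⟨b, α, β, b', α', hnode.reach_of_sat hα, hstep⟩
  · rintro ⟨b, α, β, b', α', hreach, hstep⟩
    obtain ⟨φ, hnode, hφ⟩ := hreach.exists_cgNode
    exact ⟨b, φ, b', _, hnode, hstep.1, ⟨α', hstep.update_of_sat hφ⟩, rfl⟩

end DDS

namespace IsDPNtoDDS

variable {P T A V : Type} {N : DPN P T A V} {k : ℕ} {D : DDS (P → ℕ) A V}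

theorem step_of_firing (hD : IsDPNtoDDS N k D) {M M' : P → ℕ} {α α' : Assign V} {t : T}
    {β : TAssign V} (hM : ∀ p, M p ≤ k) (hM' : ∀ p, M' p ≤ k)
    (h : N.Firing M α t β M' α') : D.Step M α (N.lab t) ⟨α, β.write⟩ M' α' := by
  obtain ⟨-, -, -, -, hguard, htrans⟩ := hD
  obtain ⟨hread, hsat, hflow, hmark, hwrite, hframe⟩ := h
  refine ⟨(htrans _ _ _).mpr ⟨hM, hM', t, rfl, hflow, hmark⟩, fun _ => rfl, ?_⟩
  rw [hguard t]
  exact ⟨hwrite, hframe,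
    ((N.guard t).sat_congr β ⟨α, β.write⟩ hread (fun _ _ => rfl)).mp hsat⟩

theorem exists_firing_of_step (hD : IsDPNtoDDS N k D) {M M' : P → ℕ} {α α' : Assign V}
    {a : A} {β : TAssign V} (h : D.Step M α a β M' α') :
    ∃ t, N.lab t = a ∧ N.Firing M α t β M' α' := by
  obtain ⟨-, -, -, -, hguard, htrans⟩ := hD
  obtain ⟨hstep, hread, hwrite, hframe, hsat⟩ := h
  obtain ⟨-, -, t, rfl, hflow, hmark⟩ := (htrans _ _ _).mp hstep
  rw [hguard t] at hwrite hframe hsat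
  exact ⟨t, rfl, fun v _ => hread v, hsat, hflow, hmark, hwrite, hframe⟩

theorem reach_iff (hD : IsDPNtoDDS N k D) (hbound : N.Bounded k) {c : (P → ℕ) × Assign V} :
    D.Reach (D.init, D.alphaI) c ↔ N.Reach (N.MI, N.alpha0) c := by
  have hinit : (D.init, D.alphaI) = (N.MI, N.alpha0) := by rw [hD.2.1, hD.2.2.2.1]
  rw [hinit]
  constructor
  · intro h
    induction h with
    | refl => exact DPN.Reach.refl _
    | step _ hstep ih =>
      obtain ⟨t, -, hfire⟩ := hD.exists_firing_of_step hstep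
      exact ih.step hfire
  · intro h
    induction h with
    | refl => exact DDS.Reach.refl _
    | step hreach hfire ih =>
      exact ih.step (hD.step_of_firing (hbound _ _ hreach)
        (hbound _ _ (hreach.step hfire)) hfire)

theorem exists_step_iff_exists_firing (hD : IsDPNtoDDS N k D) (hbound : N.Bounded k)
    (hinj : Function.Injective N.lab) (t : T) :
    (∃ M α β M' α', D.Reach (D.init, D.alphaI) (M, α) ∧ D.Step M α (N.lab t) β M' α') ↔
      ∃ M α β M' α', N.Reach (N.MI, N.alpha0) (M, α) ∧ N.Firing M α t β M' α' := by
  constructor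
  · rintro ⟨M, α, β, M', α', hreach, hstep⟩
    obtain ⟨t', hlab, hfire⟩ := hD.exists_firing_of_step hstep
    obtain rfl := hinj hlab
    exact ⟨M, α, β, M', α', (hD.reach_iff hbound).mp hreach, hfire⟩
  · rintro ⟨M, α, β, M', α', hreach, hfire⟩
    exact ⟨M, α, _, M', α', (hD.reach_iff hbound).mpr hreach,
      hD.step_of_firing (hbound _ _ hreach) (hbound _ _ (hreach.step hfire)) hfire⟩

end IsDPNtoDDS

theorem dpn_P3_iff_label_on_cg_edge_general {P T A V : Type}
    (N : DPN P T A V) (k : ℕ) (D : DDS (P → ℕ) A V)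
    (hbound : N.Bounded k) (hinj : Function.Injective N.lab)
    (hDDS : IsDPNtoDDS N k D) :
    N.P3 ↔ ∀ t : T, ∃ (M : P → ℕ) (φ : Formula V) (M' : P → ℕ) (φ' : Formula V),
      D.CGEdge D.init (Cof D.alphaI) M φ (N.lab t) M' φ' := by
  refine forall_congr' fun t => ?_
  rw [DDS.exists_cgEdge_iff, hDDS.exists_step_iff_exists_firing hbound hinj t]

/-- Let `N` be a `k`-bounded DPN with injective labelling,
`B = DPNtoDDS(N)` and `CG` its constraint graph.  Then `N` satisfies (P3) iff for every
transition `t` of `N` the label `ℓ(t)` labels some edge of `CG`. -/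
theorem dpn_P3_iff_label_on_cg_edge {P T A V : Type}
    [Finite P] [Finite T] [Finite A] [Finite V]
    (N : DPN P T A V) (k : ℕ) (D : DDS (P → ℕ) A V)
    (hbound : N.Bounded k) (hinj : Function.Injective N.lab)
    (hDDS : IsDPNtoDDS N k D) :
    N.P3 ↔ ∀ t : T, ∃ (M : P → ℕ) (φ : Formula V) (M' : P → ℕ) (φ' : Formula V),
      D.CGEdge D.init (Cof D.alphaI) M φ (N.lab t) M' φ' :=
  dpn_P3_iff_label_on_cg_edge_general N k D hbound hinj hDDS
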